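/- arXiv:math/9310234 — 2 statements merged into one kernel-verified Lean document; each statement's English description precedes it below -/
import Mathlib

section
/- The angle arctan(1/2) is an irrational multiple of π. -/
/-!
If `arctan q` is a rational multiple of `π`, so is `2 * arctan q`, whose cosine
`(1 - q²) / (1 + q²)` is rational. Niven's theorem confines that cosine to `{0, ±1/2, ±1}`,
which forces `q² ∈ {0, 1, 3, 1/3}`; for `q = 1/2` the cosine is `3/5`.
-/

open Real

theorem Real.cos_two_mul_arctan (x : ℝ) : cos (2 * arctan x) = (1 - x ^ 2) / (1 + x ^ 2) := by
  have : 1 + x ^ 2 ≠ 0 := by positivity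
  rw [cos_two_mul, cos_sq_arctan]
  field_simp
  ring

theorem Rat.sq_ne_three (q : ℚ) : q ^ 2 ≠ 3 := by
  have : ¬IsSquare (3 : ℚ) := by rw [Rat.isSquare_iff]; norm_num
  exact fun h ↦ this ⟨q, by rw [← h, sq]⟩

theorem irrational_arctan_ratCast_div_pi {q : ℚ} (h0 : q ≠ 0) (h1 : q ^ 2 ≠ 1) :
    Irrational (arctan q / π) := by
  rintro ⟨r, hr⟩
  have hangle : ∃ s : ℚ, 2 * arctan q = s * π :=
    ⟨2 * r, by push_cast; rw [hr]; field_simp [pi_ne_zero]⟩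
  have hcos : cos (2 * arctan q) = ((1 - q ^ 2) / (1 + q ^ 2) : ℚ) := by
    rw [cos_two_mul_arctan]; push_cast; rfl
  have hniven := niven hangle ⟨_, hcos⟩
  have hq : (1 + q ^ 2 : ℝ) ≠ 0 := by positivity
  rw [cos_two_mul_arctan] at hniven
  simp only [Set.mem_insert_iff, Set.mem_singleton_iff, div_eq_iff hq] at hniven
  rcases hniven with h | h | h | h | h
  · linarith
  · exact q.sq_ne_three (by exact_mod_cast (by linarith : (q : ℝ) ^ 2 = 3))
  · exact h1 (by exact_mod_cast (by linarith : (q : ℝ) ^ 2 = 1))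
  · have : 3 * q ^ 2 = 1 := by exact_mod_cast (by linarith : 3 * (q : ℝ) ^ 2 = 1)
    exact q⁻¹.sq_ne_three (by rw [inv_pow]; field_simp; linarith)
  · exact h0 (by exact_mod_cast pow_eq_zero_iff two_ne_zero |>.mp (by linarith : (q : ℝ) ^ 2 = 0))

/-- `arctan(1/2)` is an irrational multiple of π. -/
theorem arctan_half_div_pi_irrational : Irrational (Real.arctan (1 / 2) / Real.pi) := by
  simpa using irrational_arctan_ratCast_div_pi (q := 1 / 2) (by norm_num) (by norm_num)
end

section
/- Let A be a primitive nonnegative square matrix and B a complex matrix with |B_{jk}| ≤ A_{jk} for all j,k, such that strict inequality cannot be removed by a diagonal unitary conjugation (i.e., B is not of the form c·D A D⁻¹ with |c|=1 and D diagonal unitary). Then the spectral radius of B is strictly less than the Perron–Frobenius eigenvalue of A. -/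
/-!
Let `u` be an eigenvector of `B` for `z` and `w = |u|`; domination gives `|z| w ≤ A w`.
If `ρ ≤ |z|` then `ρ w ≤ A w`, and subinvariance for primitive `A` forces `w = t v`: for the
largest ratio `t = max wᵢ / vᵢ`, the vector `t v - w ≥ 0` vanishes at some `i`, satisfies
`A (t v - w) ≤ ρ (t v - w)`, and a power of `A` with positive `i`-th row then kills it.
Hence `|z| = ρ` and every inequality in `|∑ₖ Bᵢₖ uₖ| ≤ ∑ₖ Aᵢₖ |uₖ|` is an equality, which
forces `B = c D A D⁻¹` with `c = z / ρ` and `D` the diagonal of the phases `uᵢ / |uᵢ|`.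
-/

open Matrix Finset

theorem Complex.eq_ofReal_of_norm_le_of_sum_eq {κ : Type*} {s : Finset κ} {x : κ → ℂ}
    {a : κ → ℝ} (hle : ∀ k ∈ s, ‖x k‖ ≤ a k) (hsum : ∑ k ∈ s, x k = ∑ k ∈ s, (a k : ℂ))
    {k : κ} (hk : k ∈ s) : x k = a k := by
  have hre : ∀ k ∈ s, (x k).re ≤ a k := fun k hk => (re_le_norm _).trans (hle k hk)
  have hre_sum : ∑ k ∈ s, (x k).re = ∑ k ∈ s, a k := by simpa using congrArg re hsum
  have hk_re : (x k).re = a k := (sum_eq_sum_iff_of_le hre).mp hre_sum k hk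
  have hk_norm : (x k).re = ‖x k‖ := le_antisymm (re_le_norm _) (hk_re ▸ hle k hk)
  rw [eq_coe_norm_of_nonneg (re_eq_norm.mp hk_norm), ← hk_norm, hk_re]

namespace Matrix

variable {ι : Type*} [Fintype ι]

theorem mulVec_mono_of_nonneg {A : Matrix ι ι ℝ} (hA : ∀ i j, 0 ≤ A i j) {x y : ι → ℝ}
    (hxy : x ≤ y) : A *ᵥ x ≤ A *ᵥ y := fun i =>
  dotProduct_le_dotProduct_of_nonneg_left hxy (hA i)

theorem eq_zero_of_mulVec_apply_nonpos {M : Matrix ι ι ℝ} {i : ι} (hM : ∀ j, 0 < M i j)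
    {y : ι → ℝ} (hy : 0 ≤ y) (h : (M *ᵥ y) i ≤ 0) : y = 0 := by
  have hterm : ∀ j ∈ univ, 0 ≤ M i j * y j := fun j _ => mul_nonneg (hM j).le (hy j)
  have hsum : ∑ j, M i j * y j = 0 := le_antisymm h (sum_nonneg hterm)
  funext j
  exact (mul_eq_zero.mp ((sum_eq_zero_iff_of_nonneg hterm).mp hsum j (mem_univ j))).resolve_left
    (hM j).ne'

theorem nonneg_of_mulVec_eq_smul {A : Matrix ι ι ℝ} (hA : ∀ i j, 0 ≤ A i j) {v : ι → ℝ}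
    (hv : ∀ i, 0 < v i) {ρ : ℝ} (heig : A *ᵥ v = ρ • v) (i : ι) : 0 ≤ ρ := by
  have h : 0 ≤ (A *ᵥ v) i := dotProduct_nonneg_of_nonneg (hA i) fun j => (hv j).le
  rw [heig, Pi.smul_apply, smul_eq_mul] at h
  exact nonneg_of_mul_nonneg_left h (hv i)

theorem norm_mulVec_le_mulVec_norm {A : Matrix ι ι ℝ} {B : Matrix ι ι ℂ}
    (hdom : ∀ i j, ‖B i j‖ ≤ A i j) (u : ι → ℂ) (i : ι) :
    ‖(B *ᵥ u) i‖ ≤ (A *ᵥ fun j => ‖u j‖) i :=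
  calc ‖(B *ᵥ u) i‖ ≤ ∑ j, ‖B i j‖ * ‖u j‖ := by
        simpa only [mulVec, dotProduct, norm_mul] using norm_sum_le univ fun j => B i j * u j
    _ ≤ (A *ᵥ fun j => ‖u j‖) i :=
        sum_le_sum fun j _ => mul_le_mul_of_nonneg_right (hdom i j) (norm_nonneg _)

variable [DecidableEq ι]

theorem pow_mulVec_le_of_mulVec_le {A : Matrix ι ι ℝ} (hA : ∀ i j, 0 ≤ A i j) {ρ : ℝ}
    (hρ : 0 ≤ ρ) {y : ι → ℝ} (hy : A *ᵥ y ≤ ρ • y) (m : ℕ) : A ^ m *ᵥ y ≤ ρ ^ m • y := by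
  induction m with
  | zero => simp
  | succ m ih =>
    calc A ^ (m + 1) *ᵥ y = A *ᵥ (A ^ m *ᵥ y) := by rw [pow_succ', mulVec_mulVec]
      _ ≤ A *ᵥ (ρ ^ m • y) := mulVec_mono_of_nonneg hA ih
      _ = ρ ^ m • (A *ᵥ y) := mulVec_smul ..
      _ ≤ ρ ^ m • (ρ • y) := smul_le_smul_of_nonneg_left hy (pow_nonneg hρ m)
      _ = ρ ^ (m + 1) • y := by rw [smul_smul, pow_succ]

theorem pos_of_mulVec_eq_smul {A : Matrix ι ι ℝ} (hA : ∀ i j, 0 ≤ A i j) {r : ℕ} (hr : r ≠ 0)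
    (hprim : ∀ i j, 0 < (A ^ r) i j) {v : ι → ℝ} (hv : ∀ i, 0 < v i) {ρ : ℝ}
    (heig : A *ᵥ v = ρ • v) (i : ι) : 0 < ρ := by
  refine (nonneg_of_mulVec_eq_smul hA hv heig i).lt_of_ne' fun hρ => (hv i).ne' ?_
  have hpow : A ^ r *ᵥ v = 0 := by
    rw [← Nat.succ_pred_eq_of_ne_zero hr, pow_succ, ← mulVec_mulVec, heig, hρ, zero_smul,
      mulVec_zero]
  exact congrFun (eq_zero_of_mulVec_apply_nonpos (hprim i) (fun j => (hv j).le)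
    (by simp [hpow])) i

theorem exists_eq_smul_of_smul_le_mulVec {A : Matrix ι ι ℝ} (hA : ∀ i j, 0 ≤ A i j) {r : ℕ}
    (hprim : ∀ i j, 0 < (A ^ r) i j) {v : ι → ℝ} (hv : ∀ i, 0 < v i) {ρ : ℝ}
    (heig : A *ᵥ v = ρ • v) {w : ι → ℝ} (hw : ρ • w ≤ A *ᵥ w) : ∃ t : ℝ, w = t • v := by
  cases isEmpty_or_nonempty ι
  · exact ⟨0, Subsingleton.elim _ _⟩
  obtain ⟨i, hi⟩ := Finite.exists_max fun i => w i / v i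
  set t := w i / v i
  have hy : 0 ≤ t • v - w := fun j => by
    have := (div_le_iff₀ (hv j)).mp (hi j)
    simp only [Pi.zero_apply, Pi.sub_apply, Pi.smul_apply, smul_eq_mul]
    linarith
  have hyi : (t • v - w) i = 0 := by simp [t, div_mul_cancel₀ _ (hv i).ne']
  have hAy : A *ᵥ (t • v - w) ≤ ρ • (t • v - w) := by
    rw [mulVec_sub, mulVec_smul, heig, smul_sub, smul_comm]
    exact sub_le_sub_left hw _
  have hpow := pow_mulVec_le_of_mulVec_le hA (nonneg_of_mulVec_eq_smul hA hv heig i) hAy r i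
  have hy0 := eq_zero_of_mulVec_apply_nonpos (hprim i) hy (by simpa [hyi] using hpow)
  exact ⟨t, (sub_eq_zero.mp hy0).symm⟩

theorem exists_mulVec_eq_smul_of_mem_spectrum {K : Type*} [Field K] {B : Matrix ι ι K} {z : K}
    (hz : z ∈ spectrum K B) : ∃ u ≠ 0, B *ᵥ u = z • u := by
  rw [← spectrum_toLin', ← Module.End.hasEigenvalue_iff_mem_spectrum] at hz
  obtain ⟨u, hu⟩ := hz.exists_hasEigenvector
  exact ⟨u, hu.2, by simpa using Module.End.mem_eigenspace_iff.mp hu.1⟩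

theorem eq_smul_diagonal_mul_map_mul_diagonal_inv {A : Matrix ι ι ℝ} {B : Matrix ι ι ℂ}
    (hdom : ∀ i j, ‖B i j‖ ≤ A i j) {w : ι → ℝ} (hw : ∀ i, 0 < w i) {ρ : ℝ}
    (hAw : A *ᵥ w = ρ • w) {c : ℂ} (hc : ‖c‖ = 1) {d : ι → ℂ} (hd : ∀ i, ‖d i‖ = 1)
    (hB : B *ᵥ (fun i => d i * w i) = (c * ρ) • fun i => d i * w i) :
    B = c • (diagonal d * A.map Complex.ofReal * diagonal fun i => (d i)⁻¹) := by
  ext i j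
  have hc0 : c ≠ 0 := norm_ne_zero_iff.mp (by simp [hc])
  have hd0 : ∀ k, d k ≠ 0 := fun k => norm_ne_zero_iff.mp (by simp [hd])
  have hnorm : ∀ k ∈ univ, ‖(c * d i)⁻¹ * B i k * (d k * w k)‖ ≤ A i k * w k := fun k _ => by
    simp only [norm_mul, norm_inv, hc, hd, Complex.norm_real, Real.norm_eq_abs,
      abs_of_pos (hw k)]
    simpa using mul_le_mul_of_nonneg_right (hdom i k) (hw k).le
  have hsum : ∑ k, (c * d i)⁻¹ * B i k * (d k * w k) = ∑ k, ((A i k * w k : ℝ) : ℂ) := by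
    have hBi := congrFun hB i
    have hAi := congrFun hAw i
    simp only [mulVec, dotProduct, Pi.smul_apply, smul_eq_mul] at hBi hAi
    simp_rw [mul_assoc, ← mul_sum, hBi, ← Complex.ofReal_sum, hAi]
    push_cast
    field_simp [hd0 i]
  have hij := Complex.eq_ofReal_of_norm_le_of_sum_eq hnorm hsum (mem_univ j)
  have hwj : (w j : ℂ) ≠ 0 := Complex.ofReal_ne_zero.mpr (hw j).ne'
  rw [smul_apply, mul_diagonal, diagonal_mul, map_apply, smul_eq_mul]
  push_cast at hij
  field_simp [hd0 i, hd0 j] at hij ⊢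
  exact hij

end Matrix

theorem wielandt_strict_spectral_radius_general {n : ℕ}
    (A : Matrix (Fin n) (Fin n) ℝ)
    (hprim : ∃ r ≥ 1, ∀ j k, 0 < (A ^ r) j k)
    (B : Matrix (Fin n) (Fin n) ℂ) (hdom : ∀ j k, ‖B j k‖ ≤ A j k)
    (hnot : ¬ ∃ (c : ℂ) (d : Fin n → ℂ), ‖c‖ = 1 ∧ (∀ i, ‖d i‖ = 1) ∧
      B = c • (Matrix.diagonal d * A.map Complex.ofReal *
        Matrix.diagonal fun i => (d i)⁻¹))
    (ρ : ℝ) (v : Fin n → ℝ) (hv : ∀ i, 0 < v i)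
    (heig : Matrix.mulVec A v = ρ • v) :
    ∀ z ∈ spectrum ℂ B, ‖z‖ < ρ := by
  intro z hz
  have hA : ∀ j k, 0 ≤ A j k := fun j k => (norm_nonneg _).trans (hdom j k)
  obtain ⟨r, hr, hAr⟩ := hprim
  obtain ⟨u, hu, hBu⟩ := exists_mulVec_eq_smul_of_mem_spectrum hz
  obtain ⟨i, hui⟩ := Function.ne_iff.mp hu
  set w : Fin n → ℝ := fun j => ‖u j‖
  have hzw : ∀ j, ‖z‖ * w j ≤ (A *ᵥ w) j := fun j => by
    simpa [hBu] using norm_mulVec_le_mulVec_norm hdom u j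
  by_contra! hρz
  obtain ⟨t, hwt⟩ : ∃ t, w = t • v := exists_eq_smul_of_smul_le_mulVec hA hAr hv heig fun j =>
    (mul_le_mul_of_nonneg_right hρz (norm_nonneg _)).trans (hzw j)
  have hw : ∀ j, 0 < w j := by
    have ht : 0 < t := pos_of_mul_pos_left ((norm_pos_iff.mpr hui).trans_eq (congrFun hwt i))
      (hv i).le
    exact fun j => (congrFun hwt j).trans_gt (mul_pos ht (hv j))
  have hAw : A *ᵥ w = ρ • w := by rw [hwt, mulVec_smul, heig, smul_comm]
  have hρ : 0 < ρ := pos_of_mulVec_eq_smul hA (by omega) hAr hv heig i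
  have hzρ : ‖z‖ = ρ :=
    le_antisymm (le_of_mul_le_mul_right ((hzw i).trans_eq (congrFun hAw i)) (hw i)) hρz
  have hc : ‖z / ρ‖ = 1 := by simp [hzρ, abs_of_pos hρ, hρ.ne']
  have hd : ∀ j, ‖u j / w j‖ = 1 := fun j => by simp [w, (hw j).ne']
  have hdw : (fun j => u j / w j * w j) = u :=
    funext fun j => div_mul_cancel₀ _ (Complex.ofReal_ne_zero.mpr (hw j).ne')
  refine hnot ⟨_, _, hc, hd, eq_smul_diagonal_mul_map_mul_diagonal_inv hdom hw hAw hc hd ?_⟩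
  rw [hdw, div_mul_cancel₀ _ (Complex.ofReal_ne_zero.mpr hρ.ne'), hBu]

/-- Wielandt-type lemma: if `A` is a primitive nonnegative matrix,
`B` is a complex matrix entrywise dominated by `A` in modulus, and `B` is not of
the form `c • D A D⁻¹` with `|c| = 1` and `D` diagonal unitary, then the spectral
radius of `B` is strictly less than the Perron–Frobenius eigenvalue `ρ` of `A`
(characterized by its positive eigenvector). -/
theorem wielandt_strict_spectral_radius {n : ℕ}
    (A : Matrix (Fin n) (Fin n) ℝ) (hA : ∀ j k, 0 ≤ A j k)
    (hprim : ∃ r ≥ 1, ∀ j k, 0 < (A ^ r) j k)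
    (B : Matrix (Fin n) (Fin n) ℂ) (hdom : ∀ j k, ‖B j k‖ ≤ A j k)
    (hnot : ¬ ∃ (c : ℂ) (d : Fin n → ℂ), ‖c‖ = 1 ∧ (∀ i, ‖d i‖ = 1) ∧
      B = c • (Matrix.diagonal d * A.map Complex.ofReal *
        Matrix.diagonal fun i => (d i)⁻¹))
    (ρ : ℝ) (v : Fin n → ℝ) (hv : ∀ i, 0 < v i)
    (heig : Matrix.mulVec A v = ρ • v) :
    ∀ z ∈ spectrum ℂ B, ‖z‖ < ρ :=
  wielandt_strict_spectral_radius_general A hprim B hdom hnot ρ v hv heig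
end
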